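/- Let m ≥ n ≥ k ≥ 2 be integers. There exists a group H such that the abelianization of the binary polyhedral group ⟨m, n, k⟩ is isomorphic to ℤ × H if and only if (m, n, k) = (6, 3, 2), (4, 4, 2) or (3, 3, 3). -/

import Mathlib

/-- The relators `x₁^m (x₁x₂x₃)⁻¹`, `x₂^n (x₁x₂x₃)⁻¹`, `x₃^k (x₁x₂x₃)⁻¹` of the binary
polyhedral group `⟨m, n, k⟩`. -/
def bpRels (m n k : ℕ) : Set (FreeGroup (Fin 3)) :=
  { (FreeGroup.of 0) ^ m * (FreeGroup.of 0 * FreeGroup.of 1 * FreeGroup.of 2)⁻¹,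
    (FreeGroup.of 1) ^ n * (FreeGroup.of 0 * FreeGroup.of 1 * FreeGroup.of 2)⁻¹,
    (FreeGroup.of 2) ^ k * (FreeGroup.of 0 * FreeGroup.of 1 * FreeGroup.of 2)⁻¹ }

/-- The binary polyhedral group `⟨m, n, k⟩ = ⟨x₁, x₂, x₃ ∣ x₁^m = x₂^n = x₃^k = x₁x₂x₃⟩`. -/
abbrev BinaryPolyhedral (m n k : ℕ) : Type := PresentedGroup (bpRels m n k)

namespace BPaux

open Multiplicative

/-- image of the i-th generator in the abelianization -/
def gen (m n k : ℕ) (i : Fin 3) : Abelianization (BinaryPolyhedral m n k) :=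
  Abelianization.of (PresentedGroup.of i)

lemma mk_rel_eq_one {α : Type*} (rels : Set (FreeGroup α)) {r : FreeGroup α} (hr : r ∈ rels) :
    PresentedGroup.mk rels r = 1 :=
  (QuotientGroup.eq_one_iff _).mpr (Subgroup.subset_normalClosure hr)

lemma gen_rel (m n k : ℕ) (i : Fin 3) (e : ℕ)
    (hmem : (FreeGroup.of i) ^ e * (FreeGroup.of 0 * FreeGroup.of 1 * FreeGroup.of 2)⁻¹
      ∈ bpRels m n k) :
    gen m n k i ^ e = gen m n k 0 * gen m n k 1 * gen m n k 2 := by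
  have h := mk_rel_eq_one (bpRels m n k) hmem
  have h2 := congrArg Abelianization.of h
  simp only [map_mul, map_pow, map_inv, map_one, mul_inv_eq_one] at h2
  exact h2

lemma gen_rel0 (m n k : ℕ) :
    gen m n k 0 ^ m = gen m n k 0 * gen m n k 1 * gen m n k 2 :=
  gen_rel m n k 0 m (by left; rfl)

lemma gen_rel1 (m n k : ℕ) :
    gen m n k 1 ^ n = gen m n k 0 * gen m n k 1 * gen m n k 2 :=
  gen_rel m n k 1 n (by right; left; rfl)

lemma gen_rel2 (m n k : ℕ) :
    gen m n k 2 ^ k = gen m n k 0 * gen m n k 1 * gen m n k 2 :=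
  gen_rel m n k 2 k (by right; right; rfl)

lemma closure_gen (m n k : ℕ) :
    Subgroup.closure {gen m n k 0, gen m n k 1, gen m n k 2} = ⊤ := by
  rw [eq_top_iff]
  rintro g -
  obtain ⟨x, rfl⟩ : ∃ x, Abelianization.of x = g := ⟨Quotient.out g, Quotient.out_eq g⟩
  obtain ⟨w, rfl⟩ := PresentedGroup.mk_surjective (bpRels m n k) x
  induction w using FreeGroup.induction_on with
  | C1 => simp only [map_one]; exact one_mem _
  | of i =>
      apply Subgroup.subset_closure
      fin_cases i
      · exact Set.mem_insert _ _
      · exact Set.mem_insert_of_mem _ (Set.mem_insert _ _)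
      · exact Set.mem_insert_of_mem _ (Set.mem_insert_of_mem _ rfl)
  | inv_of i h => simp only [map_inv]; exact inv_mem h
  | mul x y hx hy => simp only [map_mul]; exact mul_mem hx hy

lemma finOrder_of_pow_eq_pow {G : Type*} [Group G] (x : G) (p q : ℕ) (hpq : p ≠ q)
    (h : x ^ p = x ^ q) : IsOfFinOrder x := by
  rcases hpq.lt_or_gt with hlt | hlt
  · rw [isOfFinOrder_iff_pow_eq_one]
    refine ⟨q - p, by omega, ?_⟩
    have : x ^ p * x ^ (q - p) = x ^ p * 1 := by
      rw [mul_one, ← pow_add, h]; congr 1; omega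
    exact mul_left_cancel this
  · rw [isOfFinOrder_iff_pow_eq_one]
    refine ⟨p - q, by omega, ?_⟩
    have : x ^ q * x ^ (p - q) = x ^ q * 1 := by
      rw [mul_one, ← pow_add, ← h]; congr 1; omega
    exact mul_left_cancel this

lemma torsion_of_ne (m n k : ℕ) (hm : 0 < m) (hn : 0 < n) (hkk : 0 < k)
    (hne : m * n * k ≠ m * n + n * k + m * k) (g : Abelianization (BinaryPolyhedral m n k)) :
    IsOfFinOrder g := by
  set a := gen m n k 0
  set b := gen m n k 1
  set c := gen m n k 2
  set s := a * b * c with hs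
  have h0 : a ^ m = s := gen_rel0 m n k
  have h1 : b ^ n = s := gen_rel1 m n k
  have h2 : c ^ k = s := gen_rel2 m n k
  have hsfin : IsOfFinOrder s := by
    apply finOrder_of_pow_eq_pow s (m * n * k) (n * k + m * k + m * n) (by omega)
    calc s ^ (m * n * k) = a ^ (m * n * k) * b ^ (m * n * k) * c ^ (m * n * k) := by
          rw [hs, mul_pow, mul_pow]
      _ = (a ^ m) ^ (n * k) * (b ^ n) ^ (m * k) * (c ^ k) ^ (m * n) := by
          rw [← pow_mul, ← pow_mul, ← pow_mul]; ring_nf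
      _ = s ^ (n * k) * s ^ (m * k) * s ^ (m * n) := by rw [h0, h1, h2]
      _ = s ^ (n * k + m * k + m * n) := by rw [← pow_add, ← pow_add]
  obtain ⟨N, hN, hsN⟩ := isOfFinOrder_iff_pow_eq_one.mp hsfin
  have fin_of_pow : ∀ (x : Abelianization (BinaryPolyhedral m n k)) (e : ℕ), 0 < e →
      x ^ e = s → IsOfFinOrder x := by
    intro x e he hx
    rw [isOfFinOrder_iff_pow_eq_one]
    exact ⟨e * N, by positivity, by rw [pow_mul, hx, hsN]⟩
  have hT : Subgroup.closure {a, b, c} ≤ CommGroup.torsion _ := by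
    rw [Subgroup.closure_le]
    rintro x (rfl | rfl | rfl)
    · exact fin_of_pow _ m hm h0
    · exact fin_of_pow _ n hn h1
    · exact fin_of_pow _ k hkk h2
  exact hT (by rw [closure_gen m n k]; trivial : g ∈ Subgroup.closure {a, b, c})

lemma arith_classify (m n k : ℕ) (hk : 2 ≤ k) (hkn : k ≤ n) (hnm : n ≤ m)
    (h : m * n * k = m * n + n * k + m * k) :
    (m, n, k) = (6, 3, 2) ∨ (m, n, k) = (4, 4, 2) ∨ (m, n, k) = (3, 3, 3) := by
  have hm1 : 2 ≤ m := le_trans hk (le_trans hkn hnm)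
  have e1 : n * k ≤ m * n := by
    calc n * k ≤ n * m := Nat.mul_le_mul_left n (le_trans hkn hnm)
    _ = m * n := Nat.mul_comm n m
  have e2 : m * k ≤ m * n := Nat.mul_le_mul_left m hkn
  have hk3 : k ≤ 3 := by
    by_contra hc
    push_neg at hc
    have : m * n * 4 ≤ m * n * k := Nat.mul_le_mul_left (m * n) hc
    nlinarith
  have hn4 : n ≤ 4 := by
    by_contra hc
    push_neg at hc
    have e3 : n * k ≤ m * k := Nat.mul_le_mul_right k hnm
    have e4 : m * n ≤ m * n * k := by nlinarith
    nlinarith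
  interval_cases k <;> interval_cases n <;> simp_all <;> omega

lemma mem_closure_pair {G : Type} [CommGroup G] (a u x : G)
    (h : x ∈ Subgroup.closure {a, u}) : ∃ i j : ℤ, x = a ^ i * u ^ j := by
  induction h using Subgroup.closure_induction'' with
  | one => exact ⟨0, 0, by simp⟩
  | mem y hy =>
      rcases hy with rfl | rfl
      · exact ⟨1, 0, by simp⟩
      · exact ⟨0, 1, by simp⟩
  | inv_mem y hy =>
      rcases hy with rfl | rfl
      · exact ⟨-1, 0, by simp⟩
      · exact ⟨0, -1, by simp⟩
  | mul y z _ _ hy hz =>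
      obtain ⟨i, j, rfl⟩ := hy
      obtain ⟨i', j', rfl⟩ := hz
      refine ⟨i + i', j + j', ?_⟩
      rw [zpow_add, zpow_add, mul_mul_mul_comm, mul_assoc]

lemma bij_lemma {G : Type} [CommGroup G] (d : ℕ) [NeZero d] (a u : G) (hu : u ^ (d : ℤ) = 1)
    (Φ : G →* Multiplicative ℤ × Multiplicative (ZMod d))
    (ha : Φ a = (ofAdd 1, 1))
    (hb : Φ u = (1, ofAdd 1))
    (hgen : ∀ g : G, ∃ i j : ℤ, g = a ^ i * u ^ j) :
    Function.Bijective Φ := by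
  have key : ∀ i j : ℤ, Φ (a ^ i * u ^ j) = (ofAdd i, ofAdd (j : ZMod d)) := by
    intro i j
    rw [map_mul, map_zpow, map_zpow, ha, hb]
    ext
    · show (ofAdd (1 : ℤ)) ^ i * (1 : Multiplicative ℤ) ^ j = ofAdd i
      simp [← ofAdd_zsmul]
    · show (1 : Multiplicative (ZMod d)) ^ i * (ofAdd (1 : ZMod d)) ^ j = ofAdd (j : ZMod d)
      simp [← ofAdd_zsmul]
  constructor
  · intro g g' hgg
    obtain ⟨i, j, rfl⟩ := hgen g
    obtain ⟨i', j', rfl⟩ := hgen g'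
    rw [key, key, Prod.ext_iff] at hgg
    obtain ⟨hi, hj⟩ := hgg
    have hi' : i = i' := by simpa using congrArg toAdd hi
    have hj' : (j : ZMod d) = (j' : ZMod d) := by simpa using congrArg toAdd hj
    rw [ZMod.intCast_eq_intCast_iff'] at hj'
    have hdvd : (d : ℤ) ∣ j' - j := Int.ModEq.dvd (hj' : j ≡ j' [ZMOD (d : ℤ)])
    obtain ⟨t, ht⟩ := hdvd
    have huj : u ^ j' = u ^ j := by
      have : j' = j + (d : ℤ) * t := by omega
      rw [this, zpow_add, zpow_mul, hu, one_zpow, mul_one]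
    rw [hi', huj]
  · rintro ⟨p, q⟩
    refine ⟨a ^ toAdd p * u ^ ((toAdd q).val : ℤ), ?_⟩
    rw [key]
    ext
    · simp
    · show ((((toAdd q).val : ℤ) : ZMod d)) = toAdd q
      push_cast
      simp [ZMod.natCast_val, ZMod.cast_id]

section cases

/-! ### Case (6,3,2) -/

def f632 : Fin 3 → Multiplicative ℤ × Multiplicative (ZMod 1) :=
  ![(ofAdd 1, 1), (ofAdd 2, 1), (ofAdd 3, 1)]

lemma f632_rels : ∀ r ∈ bpRels 6 3 2, FreeGroup.lift f632 r = 1 := by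
  rintro r (rfl | rfl | rfl) <;>
    · simp only [map_mul, map_pow, map_inv, FreeGroup.lift_apply_of, f632]
      decide

def Φ632 : Abelianization (BinaryPolyhedral 6 3 2) →*
    Multiplicative ℤ × Multiplicative (ZMod 1) :=
  Abelianization.lift (PresentedGroup.toGroup f632_rels)

lemma Φ632_gen (i : Fin 3) : Φ632 (gen 6 3 2 i) = f632 i := by
  simp [Φ632, gen, Abelianization.lift_apply_of, PresentedGroup.toGroup.of]

lemma case632 :
    Nonempty (Abelianization (BinaryPolyhedral 6 3 2) ≃*
      Multiplicative ℤ × Multiplicative (ZMod 1)) := by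
  set a := gen 6 3 2 0 with hadef
  set b := gen 6 3 2 1 with hbdef
  set c := gen 6 3 2 2 with hcdef
  have h0 : a ^ 6 = a * b * c := gen_rel0 6 3 2
  have h1 : b ^ 3 = a * b * c := gen_rel1 6 3 2
  have h2 : c ^ 2 = a * b * c := gen_rel2 6 3 2
  have hc : c = a * b := by
    apply mul_right_cancel (b := c)
    rw [← sq, h2]
  have hb : b = a ^ 2 := by
    apply mul_right_cancel (b := b ^ 2)
    calc b * b ^ 2 = b ^ 3 := by group
      _ = a * b * c := h1
      _ = a ^ 2 * b ^ 2 := by rw [hc]; simp [pow_succ, mul_comm, mul_left_comm, mul_assoc]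
  have hc' : c = a ^ 3 := by rw [hc, hb]; group
  have hgen : ∀ g : Abelianization (BinaryPolyhedral 6 3 2),
      ∃ i j : ℤ, g = a ^ i * (1 : Abelianization (BinaryPolyhedral 6 3 2)) ^ j := by
    intro g
    apply mem_closure_pair
    have hg : g ∈ Subgroup.closure {a, b, c} := by
      rw [hadef, hbdef, hcdef, closure_gen]; trivial
    have hamem : a ∈ Subgroup.closure
        ({a, 1} : Set (Abelianization (BinaryPolyhedral 6 3 2))) :=
      Subgroup.subset_closure (Set.mem_insert _ _)
    refine Subgroup.closure_le _ |>.mpr ?_ hg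
    rintro x (rfl | rfl | rfl)
    · exact hamem
    · rw [hb]; exact pow_mem hamem 2
    · rw [hc']; exact pow_mem hamem 3
  refine ⟨MulEquiv.ofBijective Φ632 (bij_lemma 1 a 1 (one_zpow _) Φ632 ?_ ?_ hgen)⟩
  · rw [hadef, Φ632_gen]; decide
  · rw [map_one]; decide

/-! ### Case (4,4,2) -/

def f442 : Fin 3 → Multiplicative ℤ × Multiplicative (ZMod 2) :=
  ![(ofAdd 1, 1), (ofAdd 1, ofAdd 1), (ofAdd 2, ofAdd 1)]

lemma f442_rels : ∀ r ∈ bpRels 4 4 2, FreeGroup.lift f442 r = 1 := by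
  rintro r (rfl | rfl | rfl) <;>
    · simp only [map_mul, map_pow, map_inv, FreeGroup.lift_apply_of, f442]
      decide

def Φ442 : Abelianization (BinaryPolyhedral 4 4 2) →*
    Multiplicative ℤ × Multiplicative (ZMod 2) :=
  Abelianization.lift (PresentedGroup.toGroup f442_rels)

lemma Φ442_gen (i : Fin 3) : Φ442 (gen 4 4 2 i) = f442 i := by
  simp [Φ442, gen, Abelianization.lift_apply_of, PresentedGroup.toGroup.of]

lemma case442 :
    Nonempty (Abelianization (BinaryPolyhedral 4 4 2) ≃*
      Multiplicative ℤ × Multiplicative (ZMod 2)) := by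
  set a := gen 4 4 2 0 with hadef
  set b := gen 4 4 2 1 with hbdef
  set c := gen 4 4 2 2 with hcdef
  have h0 : a ^ 4 = a * b * c := gen_rel0 4 4 2
  have h2 : c ^ 2 = a * b * c := gen_rel2 4 4 2
  have hc : c = a * b := by
    apply mul_right_cancel (b := c)
    rw [← sq, h2]
  have hab : a ^ 2 = b ^ 2 := by
    apply mul_left_cancel (a := a ^ 2)
    calc a ^ 2 * a ^ 2 = a ^ 4 := by group
      _ = a * b * c := h0
      _ = a ^ 2 * b ^ 2 := by rw [hc]; simp [pow_succ, mul_comm, mul_left_comm, mul_assoc]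
  set u := b * a⁻¹ with hudef
  have hu2 : u ^ (2 : ℕ) = 1 := by
    rw [hudef, mul_pow, inv_pow, ← hab, mul_inv_cancel]
  have hu : u ^ ((2 : ℕ) : ℤ) = 1 := by rw [zpow_natCast]; exact hu2
  have hbau : b = a * u := by
    rw [hudef, mul_comm b a⁻¹, ← mul_assoc, mul_inv_cancel, one_mul]
  have hgen : ∀ g : Abelianization (BinaryPolyhedral 4 4 2),
      ∃ i j : ℤ, g = a ^ i * u ^ j := by
    intro g
    apply mem_closure_pair
    have hg : g ∈ Subgroup.closure {a, b, c} := by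
      rw [hadef, hbdef, hcdef, closure_gen]; trivial
    have hamem : a ∈ Subgroup.closure
        ({a, u} : Set (Abelianization (BinaryPolyhedral 4 4 2))) :=
      Subgroup.subset_closure (Set.mem_insert _ _)
    have humem : u ∈ Subgroup.closure
        ({a, u} : Set (Abelianization (BinaryPolyhedral 4 4 2))) :=
      Subgroup.subset_closure (Set.mem_insert_of_mem _ rfl)
    refine Subgroup.closure_le _ |>.mpr ?_ hg
    rintro x (rfl | rfl | rfl)
    · exact hamem
    · rw [hbau]; exact mul_mem hamem humem
    · rw [hc, hbau, ← mul_assoc]; exact mul_mem (mul_mem hamem hamem) humem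
  refine ⟨MulEquiv.ofBijective Φ442 (bij_lemma 2 a u hu Φ442 ?_ ?_ hgen)⟩
  · rw [hadef, Φ442_gen]; decide
  · rw [hudef, map_mul, map_inv, hadef, hbdef, Φ442_gen, Φ442_gen]; decide

/-! ### Case (3,3,3) -/

def f333 : Fin 3 → Multiplicative ℤ × Multiplicative (ZMod 3) :=
  ![(ofAdd 1, 1), (ofAdd 1, ofAdd 1), (ofAdd 1, ofAdd 2)]

lemma f333_rels : ∀ r ∈ bpRels 3 3 3, FreeGroup.lift f333 r = 1 := by
  rintro r (rfl | rfl | rfl) <;>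
    · simp only [map_mul, map_pow, map_inv, FreeGroup.lift_apply_of, f333]
      decide

def Φ333 : Abelianization (BinaryPolyhedral 3 3 3) →*
    Multiplicative ℤ × Multiplicative (ZMod 3) :=
  Abelianization.lift (PresentedGroup.toGroup f333_rels)

lemma Φ333_gen (i : Fin 3) : Φ333 (gen 3 3 3 i) = f333 i := by
  simp [Φ333, gen, Abelianization.lift_apply_of, PresentedGroup.toGroup.of]

lemma case333 :
    Nonempty (Abelianization (BinaryPolyhedral 3 3 3) ≃*
      Multiplicative ℤ × Multiplicative (ZMod 3)) := by
  set a := gen 3 3 3 0 with hadef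
  set b := gen 3 3 3 1 with hbdef
  set c := gen 3 3 3 2 with hcdef
  have h0 : a ^ 3 = a * b * c := gen_rel0 3 3 3
  have h1 : b ^ 3 = a * b * c := gen_rel1 3 3 3
  set u := b * a⁻¹ with hudef
  have hu3 : u ^ (3 : ℕ) = 1 := by
    rw [hudef, mul_pow, inv_pow, h1, h0, mul_inv_cancel]
  have hu : u ^ ((3 : ℕ) : ℤ) = 1 := by rw [zpow_natCast]; exact hu3
  have hbau : b = a * u := by
    rw [hudef, mul_comm b a⁻¹, ← mul_assoc, mul_inv_cancel, one_mul]
  have hcab : c = (a * b)⁻¹ * a ^ 3 := by rw [h0]; group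
  have hgen : ∀ g : Abelianization (BinaryPolyhedral 3 3 3),
      ∃ i j : ℤ, g = a ^ i * u ^ j := by
    intro g
    apply mem_closure_pair
    have hg : g ∈ Subgroup.closure {a, b, c} := by
      rw [hadef, hbdef, hcdef, closure_gen]; trivial
    have hamem : a ∈ Subgroup.closure
        ({a, u} : Set (Abelianization (BinaryPolyhedral 3 3 3))) :=
      Subgroup.subset_closure (Set.mem_insert _ _)
    have humem : u ∈ Subgroup.closure
        ({a, u} : Set (Abelianization (BinaryPolyhedral 3 3 3))) :=
      Subgroup.subset_closure (Set.mem_insert_of_mem _ rfl)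
    have hbmem : b ∈ Subgroup.closure
        ({a, u} : Set (Abelianization (BinaryPolyhedral 3 3 3))) := by
      rw [hbau]; exact mul_mem hamem humem
    refine Subgroup.closure_le _ |>.mpr ?_ hg
    rintro x (rfl | rfl | rfl)
    · exact hamem
    · exact hbmem
    · rw [hcab]; exact mul_mem (inv_mem (mul_mem hamem hbmem)) (pow_mem hamem 3)
  refine ⟨MulEquiv.ofBijective Φ333 (bij_lemma 3 a u hu Φ333 ?_ ?_ hgen)⟩
  · rw [hadef, Φ333_gen]; decide
  · rw [hudef, map_mul, map_inv, hadef, hbdef, Φ333_gen, Φ333_gen]; decide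

end cases

end BPaux

theorem abelianization_binaryPolyhedral_infinite_iff (m n k : ℕ)
    (hk : 2 ≤ k) (hkn : k ≤ n) (hnm : n ≤ m) :
    (∃ (H : Type) (_ : Group H),
        Nonempty (Abelianization (BinaryPolyhedral m n k) ≃* Multiplicative ℤ × H)) ↔
      (m, n, k) = (6, 3, 2) ∨ (m, n, k) = (4, 4, 2) ∨ (m, n, k) = (3, 3, 3) := by
  constructor
  · rintro ⟨H, _, ⟨e⟩⟩
    apply BPaux.arith_classify m n k hk hkn hnm
    by_contra hne
    have htor := BPaux.torsion_of_ne m n k (by omega) (by omega) (by omega) hne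
    have hfin : IsOfFinOrder ((Multiplicative.ofAdd (1 : ℤ), (1 : H)) :
        Multiplicative ℤ × H) := by
      have h1 := (e.toMonoidHom).isOfFinOrder
        (htor (e.symm (Multiplicative.ofAdd (1 : ℤ), (1 : H))))
      simpa using h1
    obtain ⟨N, hN, hp⟩ := isOfFinOrder_iff_pow_eq_one.mp hfin
    have h2 : (Multiplicative.ofAdd (1 : ℤ)) ^ N = 1 := by
      simpa using congrArg Prod.fst hp
    have h3 : (N : ℤ) • (1 : ℤ) = 0 := by simpa using congrArg Multiplicative.toAdd h2
    simp only [smul_eq_mul, mul_one] at h3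
    omega
  · rintro (h | h | h) <;> simp only [Prod.mk.injEq] at h <;>
      obtain ⟨rfl, rfl, rfl⟩ := h
    · exact ⟨Multiplicative (ZMod 1), inferInstance, BPaux.case632⟩
    · exact ⟨Multiplicative (ZMod 2), inferInstance, BPaux.case442⟩
    · exact ⟨Multiplicative (ZMod 3), inferInstance, BPaux.case333⟩
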